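/- Let 𝕀 be an interval hypergraph on [n] that is closed under intersection. Then the orientation sending each I ∈ 𝕀 to max(I) is acyclic, is the greatest element of the hypergraphic poset P_𝕀, and equals the least upper bound in P_𝕀 of the family {A_j : j ∈ 𝒥_𝕀}. -/

import Mathlib

/-!
An acyclic orientation `B` is the orientation `Or_π` of any linear extension `π` of its
precedence order `≺_B` (each hyperedge is oriented towards its first element in `π`). Sorting `π`
by adjacent transpositions into the decreasing order changes `Or_π` at each step either not at
all or by an increasing flip, and the decreasing order induces the orientation `T` by maxima; so
`T` is the top of `P_𝕀`, in particular an upper bound of the `A_j`. It is the least one: if an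
upper bound `C` had `C H < max H`, then for `j = C H + 1` the orientation `C` would point on
`J_j ⊆ H` at some element `≥ j`, while `C H = j - 1 ∈ J_j`, a cycle of length two.
-/

namespace IHL

/-- The hyperedges of a hypergraph, as a subtype. -/
abbrev Edge (𝕀 : Finset (Finset ℕ)) : Type := {H : Finset ℕ // H ∈ 𝕀}

/-- `ℋ` is a hypergraph on `[n] = {1,…,n}`: hyperedges are nonempty subsets of `[n]`
and all singletons belong to `ℋ`. -/
def IsHypergraph (n : ℕ) (ℋ : Finset (Finset ℕ)) : Prop :=
  (∀ H ∈ ℋ, H.Nonempty ∧ H ⊆ Finset.Icc 1 n) ∧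
    ∀ i, 1 ≤ i → i ≤ n → ({i} : Finset ℕ) ∈ ℋ

/-- `𝕀` is an interval hypergraph on `[n]`: hyperedges are intervals `[a,b] ⊆ [n]`
and all singletons belong to `𝕀`. -/
def IsIntervalHypergraph (n : ℕ) (𝕀 : Finset (Finset ℕ)) : Prop :=
  (∀ H ∈ 𝕀, ∃ a b, 1 ≤ a ∧ a ≤ b ∧ b ≤ n ∧ H = Finset.Icc a b) ∧
    ∀ i, 1 ≤ i → i ≤ n → ({i} : Finset ℕ) ∈ 𝕀

/-- An orientation assigns to each hyperedge one of its elements. -/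
def IsOrientation (𝕀 : Finset (Finset ℕ)) (O : Edge 𝕀 → ℕ) : Prop :=
  ∀ H : Edge 𝕀, O H ∈ H.1

/-- Acyclicity: there is no cyclic sequence `H_0, …, H_k` with `k ≥ 2`, `H_k = H_0`, and
`O (H (p+1)) ∈ H p \ {O (H p)}` for all `p < k`. -/
def IsAcyclic (𝕀 : Finset (Finset ℕ)) (O : Edge 𝕀 → ℕ) : Prop :=
  ¬∃ (k : ℕ) (H : ℕ → Edge 𝕀), 2 ≤ k ∧ H k = H 0 ∧
    ∀ p < k, O (H (p + 1)) ∈ (H p).1 ∧ O (H (p + 1)) ≠ O (H p)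

/-- An acyclic orientation, i.e. an element of the hypergraphic poset. -/
def AcycOr (𝕀 : Finset (Finset ℕ)) (O : Edge 𝕀 → ℕ) : Prop :=
  IsOrientation 𝕀 O ∧ IsAcyclic 𝕀 O

/-- Increasing flip from `O` to `O'` flipping `i` to `j`. -/
def IsIncFlip (n : ℕ) (𝕀 : Finset (Finset ℕ)) (i j : ℕ) (O O' : Edge 𝕀 → ℕ) : Prop :=
  O ≠ O' ∧ 1 ≤ i ∧ i < j ∧ j ≤ n ∧
    ∀ H : Edge 𝕀,
      (O H ≠ O' H → O H = i ∧ O' H = j) ∧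
      (i ∈ H.1 → j ∈ H.1 → (O H = i ↔ O' H = j))

/-- One increasing flip step between acyclic orientations. -/
def FlipStep (n : ℕ) (𝕀 : Finset (Finset ℕ)) (O O' : Edge 𝕀 → ℕ) : Prop :=
  AcycOr 𝕀 O ∧ AcycOr 𝕀 O' ∧ ∃ i j, IsIncFlip n 𝕀 i j O O'

/-- The order of the hypergraphic poset `P_𝕀`: reflexive-transitive closure of
the increasing flip relation on acyclic orientations. -/
def leP (n : ℕ) (𝕀 : Finset (Finset ℕ)) : (Edge 𝕀 → ℕ) → (Edge 𝕀 → ℕ) → Prop :=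
  Relation.ReflTransGen (FlipStep n 𝕀)

/-- Strict order of the hypergraphic poset. -/
def ltP (n : ℕ) (𝕀 : Finset (Finset ℕ)) (A B : Edge 𝕀 → ℕ) : Prop :=
  leP n 𝕀 A B ∧ A ≠ B

/-- `B` covers `A` in `P_𝕀`. -/
def CoversP (n : ℕ) (𝕀 : Finset (Finset ℕ)) (A B : Edge 𝕀 → ℕ) : Prop :=
  ltP n 𝕀 A B ∧ ¬∃ C, AcycOr 𝕀 C ∧ ltP n 𝕀 A C ∧ ltP n 𝕀 C B

/-- `𝕀` is closed under intersection. -/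
def ClosedUnderIntersection (𝕀 : Finset (Finset ℕ)) : Prop :=
  ∀ I ∈ 𝕀, ∀ J ∈ 𝕀, (I ∩ J).Nonempty → I ∩ J ∈ 𝕀

/-- `π` is a permutation of `[n]` (it fixes everything outside `[1,n]`). -/
def IsPermOn (n : ℕ) (π : Equiv.Perm ℕ) : Prop :=
  ∀ x, x ∉ Finset.Icc 1 n → π x = x

/-- The surjection `Or` from permutations to acyclic orientations:
`Or_π (H) = π (min {p : π p ∈ H})`. -/
noncomputable def orMap (𝕀 : Finset (Finset ℕ)) (π : Equiv.Perm ℕ) : Edge 𝕀 → ℕ :=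
  fun H => π (sInf {p | π p ∈ H.1})

/-- The weak order on permutations of `[n]`, via inclusion of inversion sets. -/
def weakLe (n : ℕ) (σ τ : Equiv.Perm ℕ) : Prop :=
  ∀ a b, 1 ≤ a → a < b → b ≤ n → σ.symm b < σ.symm a → τ.symm b < τ.symm a

/-- `π` contains the pattern 231. -/
def Contains231 (n : ℕ) (π : Equiv.Perm ℕ) : Prop :=
  ∃ p q r, 1 ≤ p ∧ p < q ∧ q < r ∧ r ≤ n ∧ π r < π p ∧ π p < π q

/-- `π` contains the pattern 213. -/
def Contains213 (n : ℕ) (π : Equiv.Perm ℕ) : Prop :=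
  ∃ p q r, 1 ≤ p ∧ p < q ∧ q < r ∧ r ≤ n ∧ π q < π p ∧ π p < π r

/-- The partial order `≺_A`: transitive closure of `A H ≺ h` for `h ∈ H \ {A H}`. -/
def prec (𝕀 : Finset (Finset ℕ)) (A : Edge 𝕀 → ℕ) : ℕ → ℕ → Prop :=
  Relation.TransGen fun a b => ∃ H : Edge 𝕀, A H = a ∧ b ∈ H.1 ∧ b ≠ a

/-- The distributivity condition on interval hypergraphs: for all `I, J ∈ 𝕀` with
`I ⊈ J`, `J ⊈ I` and `I ∩ J ≠ ∅`, the intersection `I ∩ J` is in `𝕀` and is initial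
or final in any `K ∈ 𝕀` containing it. -/
def IsDistribHG (𝕀 : Finset (Finset ℕ)) : Prop :=
  ∀ I ∈ 𝕀, ∀ J ∈ 𝕀, ¬I ⊆ J → ¬J ⊆ I → (I ∩ J).Nonempty →
    (I ∩ J ∈ 𝕀 ∧ ∀ K ∈ 𝕀, I ∩ J ⊆ K → ((I ∩ J).min = K.min ∨ (I ∩ J).max = K.max))

/-- `j ∈ 𝒥_𝕀 = ⋃_{I ∈ 𝕀} (I \ {min I})`. -/
def InJI (𝕀 : Finset (Finset ℕ)) (j : ℕ) : Prop :=
  ∃ I ∈ 𝕀, j ∈ I ∧ ∃ y ∈ I, y < j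

/-- `Jj` is the interval `J_j = ⋂ {I ∈ 𝕀 : j ∈ I \ {min I}}`. -/
def IsJj (𝕀 : Finset (Finset ℕ)) (j : ℕ) (Jj : Finset ℕ) : Prop :=
  ∀ x, x ∈ Jj ↔ ∀ I ∈ 𝕀, j ∈ I → (∃ y ∈ I, y < j) → x ∈ I

/-- `Aj` is the orientation `A_j` (where `μj = min J_j`):
`A_j (J) = j` if `j ∈ J` and `min J = μ_j`, and `A_j (J) = min J` otherwise. -/
def IsAj (𝕀 : Finset (Finset ℕ)) (j μj : ℕ) (Aj : Edge 𝕀 → ℕ) : Prop :=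
  ∀ J : Edge 𝕀,
    (j ∈ J.1 ∧ IsLeast (J.1 : Set ℕ) μj → Aj J = j) ∧
    (¬(j ∈ J.1 ∧ IsLeast (J.1 : Set ℕ) μj) → IsLeast (J.1 : Set ℕ) (Aj J))

/-- `Jij` is the interval `J_{ij} = ⋂ {I ∈ 𝕀 : {i,j} ⊆ I}`. -/
def IsJij (𝕀 : Finset (Finset ℕ)) (i j : ℕ) (Jij : Finset ℕ) : Prop :=
  ∀ x, x ∈ Jij ↔ ∀ I ∈ 𝕀, i ∈ I → j ∈ I → x ∈ I

/-- `(i,j) ∈ ℐ𝒥_𝕀`, where `μij = min J_{ij}`: both lie in a common hyperedge and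
`i = max ([μ_{ij}, j) \ ⋃ {J \ {min J} : J ∈ 𝕀, J ⊆ [μ_{ij}, j)})`. -/
def InIJ (n : ℕ) (𝕀 : Finset (Finset ℕ)) (i j μij : ℕ) : Prop :=
  1 ≤ i ∧ i < j ∧ j ≤ n ∧ (∃ I ∈ 𝕀, i ∈ I ∧ j ∈ I) ∧
    IsGreatest {m | μij ≤ m ∧ m < j ∧
      ∀ J ∈ 𝕀, (∀ x ∈ J, μij ≤ x ∧ x < j) → m ∈ J → ∀ y ∈ J, m ≤ y} i

/-- `Aij` is the orientation `A_{ij}` (where `μij = min J_{ij}`):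
`A_{ij} (J) = j` if `j ∈ J` and `min J ≥ μ_{ij}`, and `A_{ij} (J) = min J` otherwise. -/
def IsAij (𝕀 : Finset (Finset ℕ)) (j μij : ℕ) (Aij : Edge 𝕀 → ℕ) : Prop :=
  ∀ J : Edge 𝕀,
    (j ∈ J.1 ∧ (∀ x ∈ J.1, μij ≤ x) → Aij J = j) ∧
    (¬(j ∈ J.1 ∧ (∀ x ∈ J.1, μij ≤ x)) → IsLeast (J.1 : Set ℕ) (Aij J))

/-- The reversal `x ↦ n - x + 1` on `[n]`. -/
def revPt (n x : ℕ) : ℕ := n - x + 1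

/-- The reversed hypergraph `ℋ↔`. -/
def revHG (n : ℕ) (ℋ : Finset (Finset ℕ)) : Finset (Finset ℕ) :=
  ℋ.image fun H => H.image (revPt n)

section Acyclicity

variable {ℋ : Finset (Finset ℕ)} {O : Edge ℋ → ℕ}

def EdgeStep (O : Edge ℋ → ℕ) (H K : Edge ℋ) : Prop :=
  O K ∈ H.1 ∧ O K ≠ O H

theorem exists_seq_of_transGen {α : Type*} {r : α → α → Prop} {a b : α}
    (h : Relation.TransGen r a b) :
    ∃ k, 0 < k ∧ ∃ f : ℕ → α, f 0 = a ∧ f k = b ∧ ∀ p < k, r (f p) (f (p + 1)) := by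
  induction h with
  | @single b hab =>
    refine ⟨1, one_pos, fun p => if p = 0 then a else b, rfl, rfl, fun p hp => ?_⟩
    obtain rfl : p = 0 := by omega
    simpa using hab
  | @tail b c _ hbc ih =>
    obtain ⟨k, -, f, hf0, hfk, hf⟩ := ih
    refine ⟨k + 1, k.succ_pos, fun p => if p ≤ k then f p else c, by simp [hf0], by simp,
      fun p hp => ?_⟩
    rcases Nat.lt_succ_iff_lt_or_eq.mp hp with hp | rfl
    · simpa [hp.le, Nat.succ_le_of_lt hp] using hf p hp
    · simpa [hfk] using hbc

theorem IsAcyclic.not_transGen_edgeStep (hO : IsAcyclic ℋ O) (H : Edge ℋ) :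
    ¬ Relation.TransGen (EdgeStep O) H H := by
  intro h
  obtain ⟨k, hk, f, hf0, hfk, hf⟩ := exists_seq_of_transGen h
  have hk1 : k ≠ 1 := by
    rintro rfl
    exact (hf 0 one_pos).2 (by rw [hf0, hfk])
  exact hO ⟨k, f, by omega, hfk.trans hf0.symm, hf⟩

theorem prec.exists_edgeStep_path {a b : ℕ} (h : prec ℋ O a b) :
    ∃ H K : Edge ℋ, O H = a ∧ b ∈ K.1 ∧ b ≠ O K ∧ Relation.ReflTransGen (EdgeStep O) H K := by
  induction h with
  | single hab =>
    obtain ⟨H, rfl, hb, hne⟩ := hab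
    exact ⟨H, H, rfl, hb, hne, .refl⟩
  | tail _ hbc ih =>
    obtain ⟨H, K, rfl, hbK, hbne, hHK⟩ := ih
    obtain ⟨L, rfl, hcL, hcne⟩ := hbc
    exact ⟨H, L, rfl, hcL, hcne, hHK.tail ⟨hbK, hbne⟩⟩

theorem IsAcyclic.prec_irrefl (hO : IsAcyclic ℋ O) (a : ℕ) : ¬ prec ℋ O a a := by
  intro h
  obtain ⟨H, K, rfl, hK, hne, hHK⟩ := h.exists_edgeStep_path
  exact hO.not_transGen_edgeStep K (.head' ⟨hK, hne⟩ hHK)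

def PicksStrictMin {α : Type*} [Preorder α] (κ : ℕ → α) (O : Edge ℋ → ℕ) : Prop :=
  ∀ H : Edge ℋ, ∀ x ∈ H.1, x ≠ O H → κ (O H) < κ x

theorem PicksStrictMin.isAcyclic {α : Type*} [Preorder α] {κ : ℕ → α}
    (hO : PicksStrictMin κ O) : IsAcyclic ℋ O := by
  rintro ⟨k, H, hk, hHk, hstep⟩
  have hmono : StrictMonoOn (fun p => κ (O (H p))) (Set.Iic k) :=
    strictMonoOn_Iic_of_lt_succ fun p hp => hO _ _ (hstep p hp).1 (hstep p hp).2
  have := hmono (Set.mem_Iic.mpr (Nat.zero_le k)) (Set.mem_Iic.mpr le_rfl) (by omega)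
  simp only [hHk] at this
  exact lt_irrefl _ this

theorem picksStrictMin_toDual {T : Edge ℋ → ℕ}
    (hT : ∀ H : Edge ℋ, IsGreatest (H.1 : Set ℕ) (T H)) : PicksStrictMin OrderDual.toDual T :=
  fun H _ hx hne => ((hT H).2 hx).lt_of_ne hne

open Classical in
theorem IsAcyclic.picksStrictMin_card_prec {S : Finset ℕ} (hO : IsAcyclic ℋ O)
    (hOS : ∀ H, O H ∈ S) : PicksStrictMin (fun x => (S.filter (prec ℋ O · x)).card) O := by
  intro H x hx hne
  have hstep : prec ℋ O (O H) x := .single ⟨H, rfl, hx, hne⟩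
  refine Finset.card_lt_card ((Finset.ssubset_iff_of_subset ?_).mpr ⟨O H, ?_, ?_⟩)
  · intro y
    simp only [Finset.mem_filter]
    exact And.imp_right (·.trans hstep)
  · simp [hOS H, hstep]
  · simp [hO.prec_irrefl]

end Acyclicity

section OfList

variable {ℋ : Finset (Finset ℕ)} {l : List ℕ} {H : Edge ℋ}

/-- The orientation `Or_π` of the paper, for the permutation `π` listed as `l`. -/
def ofList (ℋ : Finset (Finset ℕ)) (l : List ℕ) (H : Edge ℋ) : ℕ :=
  (l.find? (· ∈ H.1)).getD 0

theorem exists_eq_append_ofList (hl : ∃ x ∈ l, x ∈ H.1) :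
    ∃ u v, l = u ++ ofList ℋ l H :: v ∧ ofList ℋ l H ∈ H.1 ∧ ∀ y ∈ u, y ∉ H.1 := by
  obtain ⟨x, hx, hxH⟩ := hl
  obtain ⟨z, hz⟩ := Option.isSome_iff_exists.mp
    (List.find?_isSome.mpr ⟨x, hx, decide_eq_true hxH⟩ : (l.find? (· ∈ H.1)).isSome)
  have hzl : ofList ℋ l H = z := by simp [ofList, hz]
  obtain ⟨hzH, u, v, rfl, hu⟩ := List.find?_eq_some_iff_append.mp hz
  exact ⟨u, v, by rw [hzl], by simpa [hzl] using hzH, fun y hy => by simpa using hu y hy⟩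

theorem ofList_mem (hl : ∃ x ∈ l, x ∈ H.1) : ofList ℋ l H ∈ H.1 :=
  (exists_eq_append_ofList hl).choose_spec.choose_spec.2.1

theorem rel_ofList_of_pairwise {R : ℕ → ℕ → Prop} (hR : l.Pairwise R) {x : ℕ} (hx : x ∈ l)
    (hxH : x ∈ H.1) (hne : x ≠ ofList ℋ l H) : R (ofList ℋ l H) x := by
  obtain ⟨u, v, hl, -, hu⟩ := exists_eq_append_ofList ⟨x, hx, hxH⟩
  rw [hl] at hR hx
  have hxv : x ∈ v := by
    rcases List.mem_append.mp hx with hxu | hxv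
    · exact absurd hxH (hu x hxu)
    · exact (List.mem_cons.mp hxv).resolve_left hne
  exact (List.pairwise_cons.mp (List.pairwise_append.mp hR).2.1).1 x hxv

theorem picksStrictMin_idxOf (hl : ∀ H : Edge ℋ, ∃ x ∈ l, x ∈ H.1) :
    PicksStrictMin l.idxOf (ofList ℋ l) := by
  intro H x hx hne
  obtain ⟨u, v, hlu, hz, hu⟩ := exists_eq_append_ofList (hl H)
  generalize ofList ℋ l H = z at *
  subst hlu
  dsimp only
  rw [List.idxOf_append_of_notMem fun h => hu z h hz,
    List.idxOf_append_of_notMem fun h => hu x h hx, List.idxOf_cons_self,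
    List.idxOf_cons_ne _ (Ne.symm hne)]
  omega

theorem acycOr_ofList (hl : ∀ H : Edge ℋ, ∃ x ∈ l, x ∈ H.1) : AcycOr ℋ (ofList ℋ l) :=
  ⟨fun H => ofList_mem (hl H), (picksStrictMin_idxOf hl).isAcyclic⟩

theorem ofList_eq {α : Type*} [Preorder α] {κ : ℕ → α} {O : Edge ℋ → ℕ}
    (hκ : l.Pairwise (κ · ≤ κ ·)) (hO : PicksStrictMin κ O) (hOl : ∀ H, O H ∈ H.1 ∧ O H ∈ l) :
    ofList ℋ l = O := by
  funext H
  by_contra hne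
  exact (hO H _ (ofList_mem ⟨O H, (hOl H).2, (hOl H).1⟩) hne).not_ge
    (rel_ofList_of_pairwise hκ (hOl H).2 (hOl H).1 (Ne.symm hne))

theorem ofList_swap {a b : ℕ} {u v : List ℕ} (hab : a ≠ b) (hau : a ∉ u) (hbu : b ∉ u)
    (H : Edge ℋ) :
    (ofList ℋ (u ++ a :: b :: v) H ≠ ofList ℋ (u ++ b :: a :: v) H →
      ofList ℋ (u ++ a :: b :: v) H = a ∧ ofList ℋ (u ++ b :: a :: v) H = b) ∧
    (a ∈ H.1 → b ∈ H.1 →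
      (ofList ℋ (u ++ a :: b :: v) H = a ↔ ofList ℋ (u ++ b :: a :: v) H = b)) := by
  simp only [ofList, List.find?_append, List.find?_cons]
  rcases hu : u.find? (· ∈ H.1) with _ | z
  · by_cases ha : a ∈ H.1 <;> by_cases hb : b ∈ H.1 <;> simp [ha, hb, hab, Ne.symm hab]
  · have hz := List.mem_of_find?_eq_some hu
    simp [show z ≠ a by rintro rfl; exact hau hz, show z ≠ b by rintro rfl; exact hbu hz]

end OfList

def ascendingPairs : List ℕ → ℕ
  | [] => 0
  | x :: xs => xs.countP (x < ·) + ascendingPairs xs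

theorem ascendingPairs_swap_lt {a b : ℕ} (hab : a < b) (u v : List ℕ) :
    ascendingPairs (u ++ b :: a :: v) < ascendingPairs (u ++ a :: b :: v) := by
  induction u with
  | nil =>
    simp only [List.nil_append, ascendingPairs, List.countP_cons]
    simp only [hab, hab.not_gt, decide_true, decide_false, Bool.false_eq_true, ↓reduceIte]
    omega
  | cons x u ih =>
    simp only [List.cons_append, ascendingPairs,
      ((List.Perm.swap a b v).append_left u).countP_eq]
    omega

section MaxOrientation

variable {n : ℕ} {ℋ : Finset (Finset ℕ)} {T : Edge ℋ → ℕ}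

theorem IsHypergraph.exists_mem_list (hℋ : IsHypergraph n ℋ) {l : List ℕ}
    (hl : ∀ x, x ∈ l ↔ x ∈ Finset.Icc 1 n) (H : Edge ℋ) : ∃ x ∈ l, x ∈ H.1 := by
  obtain ⟨x, hx⟩ := (hℋ.1 H.1 H.2).1
  exact ⟨x, (hl x).mpr ((hℋ.1 H.1 H.2).2 hx), hx⟩

theorem leP_ofList_of_isGreatest (hℋ : IsHypergraph n ℋ)
    (hT : ∀ H : Edge ℋ, IsGreatest (H.1 : Set ℕ) (T H)) (l : List ℕ) (hnd : l.Nodup)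
    (hl : ∀ x, x ∈ l ↔ x ∈ Finset.Icc 1 n) : leP n ℋ (ofList ℋ l) T := by
  induction hc : ascendingPairs l using Nat.strong_induction_on generalizing l with
  | _ c ih =>
  by_cases hdesc : l.IsChain (· > ·)
  · rw [ofList_eq (κ := OrderDual.toDual) ((List.isChain_iff_pairwise.mp hdesc).imp le_of_lt)
      (picksStrictMin_toDual hT) fun H => ⟨(hT H).1, (hl _).mpr ((hℋ.1 H.1 H.2).2 (hT H).1)⟩]
    exact .refl
  obtain ⟨a, b, u, v, rfl, hab⟩ : ∃ a b u v, l = u ++ a :: b :: v ∧ ¬ a > b := by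
    simpa [List.isChain_iff_forall_rel_of_append_cons_cons] using hdesc
  obtain ⟨-, hab', hdisj⟩ := List.nodup_append'.mp hnd
  have hne : a ≠ b := fun h => (List.nodup_cons.mp hab').1 (h ▸ List.mem_cons_self)
  have hlt : a < b := (not_lt.mp hab).lt_of_ne hne
  have hperm : (u ++ b :: a :: v).Perm (u ++ a :: b :: v) := (List.Perm.swap a b v).append_left u
  have hl' : ∀ x, x ∈ u ++ b :: a :: v ↔ x ∈ Finset.Icc 1 n := fun x => hperm.mem_iff.trans (hl x)
  have hle := ih _ (hc ▸ ascendingPairs_swap_lt hlt u v) _ (hperm.nodup_iff.mpr hnd) hl' rfl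
  by_cases heq : ofList ℋ (u ++ a :: b :: v) = ofList ℋ (u ++ b :: a :: v)
  · rwa [heq]
  have ha := Finset.mem_Icc.mp ((hl a).mp (by simp))
  have hb := Finset.mem_Icc.mp ((hl b).mp (by simp))
  refine .head ⟨acycOr_ofList (hℋ.exists_mem_list hl), acycOr_ofList (hℋ.exists_mem_list hl'),
    a, b, heq, ha.1, hlt, hb.2,
    ofList_swap hne (fun h => hdisj h (by simp)) (fun h => hdisj h (by simp))⟩ hle

theorem exists_ofList_eq (hℋ : IsHypergraph n ℋ) {B : Edge ℋ → ℕ} (hB : AcycOr ℋ B) :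
    ∃ l : List ℕ, l.Nodup ∧ (∀ x, x ∈ l ↔ x ∈ Finset.Icc 1 n) ∧ ofList ℋ l = B := by
  classical
  have hBn : ∀ H, B H ∈ Finset.Icc 1 n := fun H => (hℋ.1 H.1 H.2).2 (hB.1 H)
  -- Sorting `[n]` by the number of `≺_B`-predecessors yields a linear extension of `≺_B`.
  set κ := fun x => ((Finset.Icc 1 n).filter (prec ℋ B · x)).card
  have hκ : PicksStrictMin κ B := by
    exact hB.2.picksStrictMin_card_prec hBn
  set l := (Finset.Icc 1 n).toList.mergeSort (fun x y => decide (κ x ≤ κ y))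
  have hperm : l.Perm (Finset.Icc 1 n).toList := List.mergeSort_perm _ _
  have hsorted : l.Pairwise (κ · ≤ κ ·) := by
    simpa using List.pairwise_mergeSort (le := fun x y => decide (κ x ≤ κ y))
      (fun _ _ _ h₁ h₂ => by simp_all only [decide_eq_true_eq]; omega)
      (fun x y => by simpa using le_total (κ x) (κ y)) (Finset.Icc 1 n).toList
  have hl : ∀ x, x ∈ l ↔ x ∈ Finset.Icc 1 n := fun x => by simp [hperm.mem_iff]
  exact ⟨l, hperm.nodup_iff.mpr (Finset.nodup_toList _), hl,
    ofList_eq hsorted hκ fun H => ⟨hB.1 H, (hl _).mpr (hBn H)⟩⟩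

theorem leP_of_isGreatest (hℋ : IsHypergraph n ℋ)
    (hT : ∀ H : Edge ℋ, IsGreatest (H.1 : Set ℕ) (T H)) {B : Edge ℋ → ℕ} (hB : AcycOr ℋ B) :
    leP n ℋ B T := by
  obtain ⟨l, hnd, hl, rfl⟩ := exists_ofList_eq hℋ hB
  exact leP_ofList_of_isGreatest hℋ hT l hnd hl

theorem leP.apply_le {A B : Edge ℋ → ℕ} (h : leP n ℋ A B) (H : Edge ℋ) : A H ≤ B H := by
  induction h with
  | refl => exact le_rfl
  | @tail C D _ hflip ih =>
    obtain ⟨-, -, i, j, -, -, hij, -, hcond⟩ := hflip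
    by_cases hH : C H = D H
    · exact ih.trans_eq hH
    · obtain ⟨h₁, h₂⟩ := (hcond H).1 hH
      omega

end MaxOrientation

section IntervalHypergraph

variable {n : ℕ} {𝕀 : Finset (Finset ℕ)} {j μ : ℕ} {J : Finset ℕ}

theorem IsIntervalHypergraph.isHypergraph (h𝕀 : IsIntervalHypergraph n 𝕀) :
    IsHypergraph n 𝕀 := by
  refine ⟨fun I hI => ?_, h𝕀.2⟩
  obtain ⟨a, b, ha, hab, hb, rfl⟩ := h𝕀.1 I hI
  exact ⟨Finset.nonempty_Icc.mpr hab, Finset.Icc_subset_Icc ha hb⟩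

theorem IsIntervalHypergraph.mem_of_le_of_le (h𝕀 : IsIntervalHypergraph n 𝕀)
    {I : Finset ℕ} (hI : I ∈ 𝕀) {x y z : ℕ} (hx : x ∈ I) (hz : z ∈ I) (hxy : x ≤ y)
    (hyz : y ≤ z) : y ∈ I := by
  obtain ⟨a, b, -, -, -, rfl⟩ := h𝕀.1 I hI
  simp only [Finset.mem_Icc] at *
  omega

theorem IsJj.self_mem (hJ : IsJj 𝕀 j J) : j ∈ J :=
  (hJ j).mpr fun _ _ hjI _ => hjI

theorem IsJj.subset (hJ : IsJj 𝕀 j J) {I : Finset ℕ} (hI : I ∈ 𝕀) (hjI : j ∈ I) {y : ℕ}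
    (hy : y ∈ I) (hyj : y < j) : J ⊆ I :=
  fun x hx => (hJ x).mp hx I hI hjI ⟨y, hy, hyj⟩

theorem IsJj.pred_mem (h𝕀 : IsIntervalHypergraph n 𝕀) (hJ : IsJj 𝕀 j J) : j - 1 ∈ J :=
  (hJ _).mpr fun _ hI hjI ⟨_, hy, hyj⟩ =>
    h𝕀.mem_of_le_of_le hI hy hjI (by omega) (Nat.sub_le j 1)

theorem IsJj.mem (hcl : ClosedUnderIntersection 𝕀) (hj : InJI 𝕀 j) (hJ : IsJj 𝕀 j J) :
    J ∈ 𝕀 := by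
  classical
  obtain ⟨I, hI, hjI, hy⟩ := hj
  set F := 𝕀.filter fun I => j ∈ I ∧ ∃ y ∈ I, y < j
  have hF : F.Nonempty := ⟨I, by simp [F, hI, hjI, hy]⟩
  have hJF : J = F.inf' hF id := by
    ext x
    simp only [hJ x, Finset.mem_inf', id, F, Finset.mem_filter, and_imp]
  rw [hJF]
  refine (Finset.inf'_induction hF id (p := fun K => K ∈ 𝕀 ∧ j ∈ K) ?_ ?_).1
  · exact fun K₁ h₁ K₂ h₂ => ⟨hcl _ h₁.1 _ h₂.1 ⟨j, Finset.mem_inter.mpr ⟨h₁.2, h₂.2⟩⟩,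
      Finset.mem_inter.mpr ⟨h₁.2, h₂.2⟩⟩
  · intro K hK
    simp only [F, Finset.mem_filter] at hK
    exact ⟨hK.1, hK.2.1⟩

theorem IsAj.acycOr {A : Edge 𝕀 → ℕ} (hJ : IsJj 𝕀 j J) (hμ : IsLeast (J : Set ℕ) μ)
    (hA : IsAj 𝕀 j μ A) : AcycOr 𝕀 A := by
  have hμj : μ ≤ j := hμ.2 (Finset.mem_coe.mpr hJ.self_mem)
  -- `A_j` is induced by the order of `[n]` in which `j` is moved just below `μ_j`.
  refine ⟨fun H => ?_, PicksStrictMin.isAcyclic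
    (κ := fun x => if x = j then 2 * μ else 2 * x + 1) fun H x hx hne => ?_⟩
  · by_cases hH : j ∈ H.1 ∧ IsLeast (H.1 : Set ℕ) μ
    · rw [(hA H).1 hH]; exact hH.1
    · exact ((hA H).2 hH).1
  by_cases hH : j ∈ H.1 ∧ IsLeast (H.1 : Set ℕ) μ
  · rw [(hA H).1 hH] at hne ⊢
    have := hH.2.2 hx
    dsimp only
    rw [if_pos rfl, if_neg hne]
    omega
  have hmin := (hA H).2 hH
  have hlt : A H < x := (hmin.2 hx).lt_of_ne' hne
  by_cases hxj : x = j
  · subst hxj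
    have hμH : μ ∈ H.1 := hJ.subset H.2 hx hmin.1 hlt hμ.1
    have hAμ : A H ≠ μ := fun h => hH ⟨hx, h ▸ hmin⟩
    have := hmin.2 hμH
    simp only [hlt.ne, if_true, if_false]
    omega
  · dsimp only
    split_ifs <;> omega

theorem le_of_forall_Aj_le (h𝕀 : IsIntervalHypergraph n 𝕀) (hcl : ClosedUnderIntersection 𝕀)
    {Jf : ℕ → Finset ℕ} {μ : ℕ → ℕ} {Af : ℕ → Edge 𝕀 → ℕ}
    (hfam : ∀ j, InJI 𝕀 j →
      IsJj 𝕀 j (Jf j) ∧ IsLeast ((Jf j : Finset ℕ) : Set ℕ) (μ j) ∧ IsAj 𝕀 j (μ j) (Af j))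
    {T C : Edge 𝕀 → ℕ} (hT : ∀ H : Edge 𝕀, IsGreatest (H.1 : Set ℕ) (T H)) (hC : AcycOr 𝕀 C)
    (hup : ∀ j, InJI 𝕀 j → ∀ H, Af j H ≤ C H) (H : Edge 𝕀) : T H ≤ C H := by
  by_contra! hlt
  have hjH : C H + 1 ∈ H.1 := h𝕀.mem_of_le_of_le H.2 (hC.1 H) (hT H).1 (by omega) hlt
  have hj : InJI 𝕀 (C H + 1) := ⟨H.1, H.2, hjH, C H, hC.1 H, by omega⟩
  obtain ⟨hJ, hμ, hA⟩ := hfam _ hj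
  let K : Edge 𝕀 := ⟨Jf (C H + 1), hJ.mem hcl hj⟩
  have hCK : C H + 1 ≤ C K := (hA K).1 ⟨hJ.self_mem, hμ⟩ ▸ hup _ hj K
  have hHK : EdgeStep C H K := ⟨hJ.subset H.2 hjH (hC.1 H) (by omega) (hC.1 K), by omega⟩
  have hKH : EdgeStep C K H := ⟨hJ.pred_mem h𝕀, by omega⟩
  exact hC.2.not_transGen_edgeStep H (.tail (.single hHK) hKH)

end IntervalHypergraph

theorem stmt16_general (n : ℕ) (𝕀 : Finset (Finset ℕ))
    (h𝕀 : IsIntervalHypergraph n 𝕀) (hcl : ClosedUnderIntersection 𝕀)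
    (Jf : ℕ → Finset ℕ) (μ : ℕ → ℕ) (Af : ℕ → Edge 𝕀 → ℕ)
    (hfam : ∀ j, InJI 𝕀 j →
      IsJj 𝕀 j (Jf j) ∧ IsLeast ((Jf j : Finset ℕ) : Set ℕ) (μ j) ∧ IsAj 𝕀 j (μ j) (Af j))
    (T : Edge 𝕀 → ℕ) (hT : ∀ H : Edge 𝕀, IsGreatest (H.1 : Set ℕ) (T H)) :
    AcycOr 𝕀 T ∧
    (∀ B, AcycOr 𝕀 B → leP n 𝕀 B T) ∧
    (∀ j, InJI 𝕀 j → leP n 𝕀 (Af j) T) ∧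
    (∀ C, AcycOr 𝕀 C → (∀ j, InJI 𝕀 j → leP n 𝕀 (Af j) C) → leP n 𝕀 T C) := by
  have hTop : ∀ B, AcycOr 𝕀 B → leP n 𝕀 B T := fun B hB =>
    leP_of_isGreatest h𝕀.isHypergraph hT hB
  refine ⟨⟨fun H => (hT H).1, (picksStrictMin_toDual hT).isAcyclic⟩, hTop,
    fun j hj => hTop _ (IsAj.acycOr (hfam j hj).1 (hfam j hj).2.1 (hfam j hj).2.2),
    fun C hC hup => ?_⟩
  have hCT : C = T := funext fun H => le_antisymm ((hT H).2 (hC.1 H))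
    (le_of_forall_Aj_le h𝕀 hcl hfam hT hC (fun j hj => (hup j hj).apply_le) H)
  exact hCT ▸ .refl

/-- For an interval hypergraph `𝕀` closed under intersection, the
orientation sending each `I ∈ 𝕀` to `max I` is acyclic, is the greatest element of
`P_𝕀`, and is the least upper bound of the family `{A_j : j ∈ 𝒥_𝕀}`. -/
theorem stmt16 (n : ℕ) (hn : 1 ≤ n) (𝕀 : Finset (Finset ℕ))
    (h𝕀 : IsIntervalHypergraph n 𝕀) (hcl : ClosedUnderIntersection 𝕀)
    (Jf : ℕ → Finset ℕ) (μ : ℕ → ℕ) (Af : ℕ → Edge 𝕀 → ℕ)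
    (hfam : ∀ j, InJI 𝕀 j →
      IsJj 𝕀 j (Jf j) ∧ IsLeast ((Jf j : Finset ℕ) : Set ℕ) (μ j) ∧ IsAj 𝕀 j (μ j) (Af j))
    (T : Edge 𝕀 → ℕ) (hT : ∀ H : Edge 𝕀, IsGreatest (H.1 : Set ℕ) (T H)) :
    AcycOr 𝕀 T ∧
    (∀ B, AcycOr 𝕀 B → leP n 𝕀 B T) ∧
    (∀ j, InJI 𝕀 j → leP n 𝕀 (Af j) T) ∧
    (∀ C, AcycOr 𝕀 C → (∀ j, InJI 𝕀 j → leP n 𝕀 (Af j) C) → leP n 𝕀 T C) :=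
  stmt16_general n 𝕀 h𝕀 hcl Jf μ Af hfam T hT

end IHL
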